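/- Concentration for intersections with random complements: Fix integers m, ℓ, ℓ', t with m ≥ tℓ + ℓ', fix a > 0, and set ε = (2a + √(8 ln 2))/√t. Let G ⊆ binom([m], ℓ) with density α := |G|/C(m,ℓ). If H is uniformly distributed on binom([m], ℓ'), then P[ |{G ∈ G : G ∩ H = ∅}| < (α − ε)·C(m − ℓ', ℓ) ] < 2e^{−a²/2}. -/

import Mathlib

/-!
Delete the points of `H` from `[m]` one at a time. If `V` is the current ground set and the next
point `x ∈ V` is uniform, the density of `G` among the `ℓ`-subsets of `V` is unchanged on average,
moves by at most `ℓ / (v - ℓ)`, and has variance at most `ℓ v / ((v - 1) (v - ℓ))`, where `v = #V`.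
The variance bound is Cauchy–Schwarz over `G`, after which `G` may be enlarged to all `ℓ`-subsets
of `V`, where the second moment of the summed centred degrees is computed exactly.
By `exp y ≤ 1 + y + y²` for `|y| ≤ 1` the exponential moments of the steps multiply and telescope
to `exp (θ² ℓ / (n - ℓ))` with `n = m - ℓ'`; as `t ℓ ≤ n`, Markov's inequality with
`θ = ε (t - 1) / 2` bounds the proportion of bad `H` by `exp (-ε² (t - 1) / 4) ≤ exp (-a² / 2)`.
-/

open Finset

theorem Nat.cast_choose_pred_mul {n : ℕ} (ℓ : ℕ) (hn : 1 ≤ n) (hℓ : ℓ ≤ n) :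
    ((n - 1).choose ℓ : ℝ) * n = n.choose ℓ * (n - ℓ) := by
  obtain ⟨k, rfl⟩ := Nat.exists_eq_add_of_le' hn
  have := Nat.choose_mul_succ_eq k ℓ
  rw [← Nat.cast_sub hℓ]
  exact_mod_cast this

theorem Real.sum_exp_le_card_mul_exp_sum_sq {ι : Type*} {s : Finset ι} {y : ι → ℝ}
    (h0 : ∑ i ∈ s, y i = 0) (h1 : ∀ i ∈ s, |y i| ≤ 1) :
    ∑ i ∈ s, Real.exp (y i) ≤ #s * Real.exp ((∑ i ∈ s, y i ^ 2) / #s) := by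
  calc ∑ i ∈ s, Real.exp (y i)
      ≤ ∑ i ∈ s, (1 + y i + y i ^ 2) := sum_le_sum fun i hi ↦ by
        linarith [le_abs_self (Real.exp (y i) - 1 - y i), Real.abs_exp_sub_one_sub_id_le (h1 i hi)]
    _ = #s * (1 + (∑ i ∈ s, y i ^ 2) / #s) := by
        rcases s.eq_empty_or_nonempty with rfl | hs
        · simp
        rw [sum_add_distrib, sum_add_distrib, h0, mul_add,
          mul_div_cancel₀ _ (by simpa using hs.ne_empty)]
        simp
    _ ≤ #s * Real.exp ((∑ i ∈ s, y i ^ 2) / #s) := by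
        gcongr
        linarith [Real.add_one_le_exp ((∑ i ∈ s, y i ^ 2) / #s)]

namespace Finset

variable {α β : Type*} [DecidableEq α]

theorem powersetCard_erase (k : ℕ) (s : Finset α) (x : α) :
    powersetCard k (s.erase x) = {t ∈ powersetCard k s | x ∉ t} := by
  ext t
  simp only [mem_powersetCard, mem_filter, subset_erase]
  tauto

theorem sum_powersetCard_filter_mem [AddCommGroup β] (f : Finset α → β) (k : ℕ) (s : Finset α)
    (x : α) :
    ∑ t ∈ powersetCard k s with x ∈ t, f t
      = ∑ t ∈ powersetCard k s, f t - ∑ t ∈ powersetCard k (s.erase x), f t := by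
  rw [powersetCard_erase]
  exact eq_sub_of_add_eq (sum_filter_add_sum_filter_not _ (x ∈ ·) f)

theorem cast_card_powersetCard_filter_mem {k : ℕ} {s : Finset α} {x : α} (hx : x ∈ s) :
    (#{t ∈ powersetCard k s | x ∈ t} : ℝ) = (#s).choose k - (#s - 1).choose k := by
  have := sum_powersetCard_filter_mem (fun _ ↦ (1 : ℝ)) k s x
  simpa [card_erase_of_mem hx] using this

theorem sum_sum_mem_eq_sum_sum_filter [AddCommMonoid β] {𝒮 : Finset (Finset α)} {s : Finset α}
    (h𝒮 : ∀ t ∈ 𝒮, t ⊆ s) (f : Finset α → α → β) :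
    ∑ t ∈ 𝒮, ∑ x ∈ t, f t x = ∑ x ∈ s, ∑ t ∈ 𝒮 with x ∈ t, f t x :=
  sum_comm' fun t x ↦ by
    simp only [mem_filter]
    exact ⟨fun h ↦ ⟨⟨h.1, h.2⟩, h𝒮 t h.1 h.2⟩, fun h ↦ h.1⟩

theorem sum_powersetCard_sum (f : α → ℝ) (k : ℕ) (s : Finset α) :
    ∑ t ∈ powersetCard k s, ∑ x ∈ t, f x
      = ((#s).choose k - (#s - 1).choose k) * ∑ x ∈ s, f x := by
  rw [sum_sum_mem_eq_sum_sum_filter (fun t ht ↦ (mem_powersetCard.1 ht).1), mul_sum]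
  refine sum_congr rfl fun x hx ↦ ?_
  rw [sum_const, nsmul_eq_mul, cast_card_powersetCard_filter_mem hx]

theorem sum_powersetCard_sum_sq {u : α → ℝ} {s : Finset α} (hu : ∑ x ∈ s, u x = 0) (k : ℕ) :
    ∑ t ∈ powersetCard k s, (∑ x ∈ t, u x) ^ 2
      = ((#s - 1).choose k - (#s - 2).choose k) * ∑ x ∈ s, u x ^ 2 := by
  have hsum_ni : ∀ x ∈ s, ∑ t ∈ powersetCard k s with x ∈ t, ∑ y ∈ t, u y
      = ((#s - 1).choose k - (#s - 2).choose k) * u x := fun x hx ↦ by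
    rw [sum_powersetCard_filter_mem, sum_powersetCard_sum, sum_powersetCard_sum, hu,
      sum_erase_eq_sub hx, hu, card_erase_of_mem hx, Nat.sub_sub]
    ring
  simp_rw [sq, sum_mul]
  rw [sum_sum_mem_eq_sum_sum_filter (fun t ht ↦ (mem_powersetCard.1 ht).1), mul_sum]
  refine sum_congr rfl fun x hx ↦ ?_
  rw [← mul_sum, hsum_ni x hx]
  ring

theorem card_sub_smul_sum_powersetCard [AddCommMonoid β] (f : Finset α → β) (n : ℕ)
    (s : Finset α) :
    (#s - n) • ∑ t ∈ powersetCard n s, f t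
      = ∑ x ∈ s, ∑ t ∈ powersetCard n (s.erase x), f t := by
  simp_rw [powersetCard_erase, smul_sum]
  rw [sum_comm' (s' := fun t ↦ s \ t) (t' := powersetCard n s) (fun x t ↦ by
    simp only [mem_filter, mem_sdiff]; tauto)]
  refine sum_congr rfl fun t ht ↦ ?_
  rw [sum_const, card_sdiff_of_subset (mem_powersetCard.1 ht).1, (mem_powersetCard.1 ht).2]

theorem card_filter_powersetCard_sdiff (p : Finset α → Prop) [DecidablePred p]
    {k : ℕ} {V : Finset α} (hk : k ≤ #V) :
    #{H ∈ powersetCard k V | p (V \ H)} = #{K ∈ powersetCard (#V - k) V | p K} := by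
  refine card_nbij' (V \ ·) (V \ ·) (fun H hH ↦ ?_) (fun K hK ↦ ?_) (fun H hH ↦ ?_) fun K hK ↦ ?_
  · simp only [coe_filter, Set.mem_ofPred_eq, mem_powersetCard] at hH ⊢
    exact ⟨⟨sdiff_subset, by rw [card_sdiff_of_subset hH.1.1, hH.1.2]⟩, hH.2⟩
  · simp only [coe_filter, Set.mem_ofPred_eq, mem_powersetCard] at hK ⊢
    refine ⟨⟨sdiff_subset, by rw [card_sdiff_of_subset hK.1.1, hK.1.2]; omega⟩, ?_⟩
    rw [sdiff_sdiff_eq_self hK.1.1]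
    exact hK.2
  · exact sdiff_sdiff_eq_self (mem_powersetCard.1 (mem_filter.1 hH).1).1
  · exact sdiff_sdiff_eq_self (mem_powersetCard.1 (mem_filter.1 hK).1).1

theorem card_sub_mul_sum_powersetCard_exp_sub_le (φ : Finset α → ℝ) {n : ℕ} {V : Finset α}
    {B : ℝ} (hB : ∀ x ∈ V,
      ∑ K ∈ powersetCard n (V.erase x), Real.exp (φ (V.erase x) - φ K) ≤ B) :
    ((#V - n : ℕ) : ℝ) * ∑ K ∈ powersetCard n V, Real.exp (φ V - φ K)
      ≤ B * ∑ x ∈ V, Real.exp (φ V - φ (V.erase x)) := by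
  rw [← nsmul_eq_mul, card_sub_smul_sum_powersetCard, mul_sum]
  refine sum_le_sum fun x hx ↦ ?_
  calc ∑ K ∈ powersetCard n (V.erase x), Real.exp (φ V - φ K)
      = Real.exp (φ V - φ (V.erase x))
          * ∑ K ∈ powersetCard n (V.erase x), Real.exp (φ (V.erase x) - φ K) := by
        rw [mul_sum]
        exact sum_congr rfl fun K _ ↦ by rw [← Real.exp_add]; ring_nf
    _ ≤ B * Real.exp (φ V - φ (V.erase x)) := by
        rw [mul_comm]
        gcongr
        exact hB x hx

theorem sum_powersetCard_exp_sub_le (φ : Finset α → ℝ) (g : ℕ → ℝ) {n : ℕ}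
    (hstep : ∀ W : Finset α, n < #W →
      ∑ x ∈ W, Real.exp (φ W - φ (W.erase x)) ≤ #W * Real.exp (g (#W - 1) - g #W))
    {V : Finset α} (hV : n ≤ #V) :
    ∑ K ∈ powersetCard n V, Real.exp (φ V - φ K) ≤ (#V).choose n * Real.exp (g n - g #V) := by
  obtain ⟨d, hd⟩ := Nat.exists_eq_add_of_le hV
  induction d generalizing V with
  | zero =>
    rw [add_zero] at hd
    simp [← hd, powersetCard_self]
  | succ d ih =>
    rw [← add_assoc] at hd
    have hrec := card_sub_mul_sum_powersetCard_exp_sub_le φ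
      (B := (n + d).choose n * Real.exp (g n - g (n + d))) fun x hx ↦ by
        have hcard : #(V.erase x) = n + d := by rw [card_erase_of_mem hx]; omega
        simpa [hcard] using ih (by omega) hcard
    have hstepV := hstep V (by omega)
    have hchoose : ((n + d).choose n : ℝ) * (n + d + 1) = (n + d + 1).choose n * (d + 1) := by
      have := Nat.choose_mul_succ_eq (n + d) n
      rw [show n + d + 1 - n = d + 1 by omega] at this
      exact_mod_cast this
    rw [hd, show n + d + 1 - n = d + 1 by omega] at hrec
    rw [hd, Nat.add_sub_cancel] at hstepV
    rw [hd]
    refine le_of_mul_le_mul_left (hrec.trans ?_) (by positivity : (0 : ℝ) < (d + 1 : ℕ))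
    calc (n + d).choose n * Real.exp (g n - g (n + d)) * ∑ x ∈ V, Real.exp (φ V - φ (V.erase x))
        ≤ (n + d).choose n * Real.exp (g n - g (n + d))
            * ((n + d + 1 : ℕ) * Real.exp (g (n + d) - g (n + d + 1))) := by gcongr
      _ = (d + 1 : ℕ) * ((n + d + 1).choose n * Real.exp (g n - g (n + d + 1))) := by
        rw [show g n - g (n + d + 1) = (g (n + d) - g (n + d + 1)) + (g n - g (n + d)) by
          ring, Real.exp_add]
        push_cast
        linear_combination (Real.exp (g (n + d) - g (n + d + 1)) * Real.exp (g n - g (n + d)))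
          * hchoose

end Finset

variable {α : Type*} [DecidableEq α]

/-- For `V = [m] \ H` this is `|G(H̄)| / C(m - ℓ', ℓ)`. -/
noncomputable def densityIn (𝒜 : Finset (Finset α)) (ℓ : ℕ) (V : Finset α) : ℝ :=
  #{S ∈ 𝒜 | S ⊆ V} / (#V).choose ℓ

noncomputable def centeredDegree (𝒜 : Finset (Finset α)) (ℓ : ℕ) (V : Finset α) (x : α) : ℝ :=
  #V * #{S ∈ 𝒜 | x ∈ S} - ℓ * #𝒜

theorem densityIn_nonneg (𝒜 : Finset (Finset α)) (ℓ : ℕ) (V : Finset α) :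
    0 ≤ densityIn 𝒜 ℓ V := by
  unfold densityIn
  positivity

section

variable {𝒜 : Finset (Finset α)} {ℓ : ℕ} {V : Finset α}

theorem densityIn_le_one (h𝒜 : 𝒜 ⊆ powersetCard ℓ V) : densityIn 𝒜 ℓ V ≤ 1 := by
  refine div_le_one_of_le₀ ?_ (Nat.cast_nonneg _)
  exact_mod_cast (card_le_card ((filter_subset _ _).trans h𝒜)).trans (card_powersetCard ℓ V).le

theorem densityIn_zero (h𝒜 : (𝒜 : Set (Finset α)).Sized 0) (K : Finset α) :
    densityIn 𝒜 0 K = #𝒜 := by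
  rw [densityIn, Nat.choose_zero_right, Nat.cast_one, div_one,
    filter_true_of_mem fun S hS ↦ by simp [Finset.card_eq_zero.1 (h𝒜 hS)]]

theorem densityIn_filter_subset {W : Finset α} (hW : W ⊆ V) :
    densityIn {S ∈ 𝒜 | S ⊆ V} ℓ W = densityIn 𝒜 ℓ W := by
  rw [densityIn, densityIn, filter_filter]
  congr 3
  exact filter_congr fun S _ ↦ ⟨And.right, fun h ↦ ⟨h.trans hW, h⟩⟩

theorem densityIn_of_forall_subset (h : ∀ S ∈ 𝒜, S ⊆ V) :
    densityIn 𝒜 ℓ V = #𝒜 / (#V).choose ℓ := by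
  rw [densityIn, filter_true_of_mem h]

theorem densityIn_erase_of_forall_subset (h : ∀ S ∈ 𝒜, S ⊆ V) {x : α} (hx : x ∈ V) :
    densityIn 𝒜 ℓ (V.erase x) = #{S ∈ 𝒜 | x ∉ S} / (#V - 1).choose ℓ := by
  rw [densityIn, card_erase_of_mem hx]
  congr 3
  exact filter_congr fun S hS ↦ by rw [subset_erase]; exact and_iff_right (h S hS)

theorem card_filter_card_filter_disjoint_lt (h𝒜 : ∀ S ∈ 𝒜, S ⊆ V) {k : ℕ} (hk : ℓ + k ≤ #V)
    (c : ℝ) :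
    #{H ∈ powersetCard k V | (#{S ∈ 𝒜 | Disjoint S H} : ℝ) < c * (#V - k).choose ℓ}
      = #{K ∈ powersetCard (#V - k) V | densityIn 𝒜 ℓ K < c} := by
  rw [← card_filter_powersetCard_sdiff (densityIn 𝒜 ℓ · < c) (by omega)]
  congr 1
  refine filter_congr fun H hH ↦ ?_
  obtain ⟨hHV, hHk⟩ := mem_powersetCard.1 hH
  have hfilter : {S ∈ 𝒜 | S ⊆ V \ H} = {S ∈ 𝒜 | Disjoint S H} :=
    filter_congr fun S hS ↦ by rw [subset_sdiff]; exact and_iff_right (h𝒜 S hS)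
  rw [densityIn, hfilter, card_sdiff_of_subset hHV, hHk,
    div_lt_iff₀ (by exact_mod_cast Nat.choose_pos (by omega))]

theorem filter_densityIn_lt_eq_empty (h𝒜 : 𝒜 ⊆ powersetCard ℓ V) {ε : ℝ} (hε : 0 ≤ ε)
    (h : ℓ = 0 ∨ 1 ≤ ε) (n : ℕ) :
    {K ∈ powersetCard n V | densityIn 𝒜 ℓ K < densityIn 𝒜 ℓ V - ε} = ∅ := by
  refine filter_false_of_mem fun K _ ↦ not_lt.2 ?_
  rcases h with rfl | h
  · have h𝒜₀ : (𝒜 : Set (Finset α)).Sized 0 := fun S hS ↦ (mem_powersetCard.1 (h𝒜 hS)).2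
    rw [densityIn_zero h𝒜₀, densityIn_zero h𝒜₀]
    linarith
  · linarith [densityIn_nonneg 𝒜 ℓ K, densityIn_le_one h𝒜]

theorem sum_card_filter_mem (h𝒜 : 𝒜 ⊆ powersetCard ℓ V) :
    ∑ x ∈ V, #{S ∈ 𝒜 | x ∈ S} = ℓ * #𝒜 := by
  have := sum_sum_mem_eq_sum_sum_filter (fun S hS ↦ (mem_powersetCard.1 (h𝒜 hS)).1)
    (fun _ _ ↦ 1)
  simp only [sum_const, smul_eq_mul, mul_one] at this
  rw [← this, sum_congr rfl fun S hS ↦ (mem_powersetCard.1 (h𝒜 hS)).2, sum_const, smul_eq_mul,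
    mul_comm]

theorem sum_centeredDegree (h𝒜 : 𝒜 ⊆ powersetCard ℓ V) :
    ∑ x ∈ V, centeredDegree 𝒜 ℓ V x = 0 := by
  simp only [centeredDegree, sum_sub_distrib, ← mul_sum, sum_const, nsmul_eq_mul]
  rw [← Nat.cast_sum, sum_card_filter_mem h𝒜]
  push_cast
  ring

theorem card_mul_sum_sum_centeredDegree (h𝒜 : 𝒜 ⊆ powersetCard ℓ V) :
    #V * ∑ S ∈ 𝒜, ∑ x ∈ S, centeredDegree 𝒜 ℓ V x = ∑ x ∈ V, centeredDegree 𝒜 ℓ V x ^ 2 := by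
  rw [sum_sum_mem_eq_sum_sum_filter (fun S hS ↦ (mem_powersetCard.1 (h𝒜 hS)).1), mul_sum]
  have hdeg : ∀ x, (#V : ℝ) * #{S ∈ 𝒜 | x ∈ S} = centeredDegree 𝒜 ℓ V x + ℓ * #𝒜 := fun x ↦ by
    rw [centeredDegree]; ring
  calc ∑ x ∈ V, (#V : ℝ) * ∑ S ∈ 𝒜 with x ∈ S, centeredDegree 𝒜 ℓ V x
      = ∑ x ∈ V, (centeredDegree 𝒜 ℓ V x ^ 2 + ℓ * #𝒜 * centeredDegree 𝒜 ℓ V x) := by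
        refine sum_congr rfl fun x _ ↦ ?_
        rw [sum_const, nsmul_eq_mul, ← mul_assoc, hdeg]
        ring
    _ = ∑ x ∈ V, centeredDegree 𝒜 ℓ V x ^ 2 := by
        rw [sum_add_distrib, ← mul_sum, sum_centeredDegree h𝒜, mul_zero, add_zero]

theorem sum_centeredDegree_sq_le (h𝒜 : 𝒜 ⊆ powersetCard ℓ V) :
    ∑ x ∈ V, centeredDegree 𝒜 ℓ V x ^ 2
      ≤ #V ^ 2 * #𝒜 * ((#V - 1).choose ℓ - (#V - 2).choose ℓ) := by
  set Q := ∑ x ∈ V, centeredDegree 𝒜 ℓ V x ^ 2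
  set w : Finset α → ℝ := fun S ↦ ∑ x ∈ S, centeredDegree 𝒜 ℓ V x
  have hCS : (∑ S ∈ 𝒜, w S) ^ 2 ≤ #𝒜 * ∑ S ∈ 𝒜, w S ^ 2 := sq_sum_le_card_mul_sum_sq
  have hext : ∑ S ∈ 𝒜, w S ^ 2 ≤ ((#V - 1).choose ℓ - (#V - 2).choose ℓ) * Q := by
    rw [← sum_powersetCard_sum_sq (sum_centeredDegree h𝒜)]
    exact sum_le_sum_of_subset_of_nonneg h𝒜 fun _ _ _ ↦ sq_nonneg _
  have hQw : Q = #V * ∑ S ∈ 𝒜, w S := (card_mul_sum_sum_centeredDegree h𝒜).symm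
  have hQ : Q ^ 2 ≤ #V ^ 2 * #𝒜 * ((#V - 1).choose ℓ - (#V - 2).choose ℓ) * Q :=
    calc Q ^ 2 = #V ^ 2 * (∑ S ∈ 𝒜, w S) ^ 2 := by rw [hQw, mul_pow]
      _ ≤ #V ^ 2 * (#𝒜 * (((#V - 1).choose ℓ - (#V - 2).choose ℓ) * Q)) := by
        gcongr
        exact hCS.trans (by gcongr)
      _ = _ := by ring
  have hchoose : ((#V - 2).choose ℓ : ℝ) ≤ (#V - 1).choose ℓ := by
    exact_mod_cast Nat.choose_le_choose ℓ (by omega)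
  have hQ0 : 0 ≤ Q := sum_nonneg fun _ _ ↦ sq_nonneg _
  nlinarith [mul_nonneg (by positivity : (0 : ℝ) ≤ #V ^ 2 * #𝒜) (sub_nonneg.2 hchoose)]

theorem abs_centeredDegree_le (h𝒜 : 𝒜 ⊆ powersetCard ℓ V) (hℓ : ℓ ≤ #V) {x : α} (hx : x ∈ V) :
    |centeredDegree 𝒜 ℓ V x| ≤ #V * ((#V).choose ℓ - (#V - 1).choose ℓ) := by
  have hdeg : (#{S ∈ 𝒜 | x ∈ S} : ℝ) ≤ (#V).choose ℓ - (#V - 1).choose ℓ := by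
    rw [← cast_card_powersetCard_filter_mem hx]
    exact_mod_cast card_le_card (filter_subset_filter _ h𝒜)
  have hcard : (#𝒜 : ℝ) ≤ (#V).choose ℓ := by
    exact_mod_cast (card_le_card h𝒜).trans (card_powersetCard ℓ V).le
  have hid := Nat.cast_choose_pred_mul ℓ (card_pos.2 ⟨x, hx⟩) hℓ
  rw [centeredDegree, abs_le]
  constructor <;> nlinarith [(by positivity : (0 : ℝ) ≤ #{S ∈ 𝒜 | x ∈ S}),
    (by positivity : (0 : ℝ) ≤ #𝒜), (by positivity : (0 : ℝ) ≤ ℓ)]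

theorem densityIn_erase_sub (h𝒜 : 𝒜 ⊆ powersetCard ℓ V) (hℓ : ℓ < #V) {x : α} (hx : x ∈ V) :
    densityIn 𝒜 ℓ (V.erase x) - densityIn 𝒜 ℓ V
      = -centeredDegree 𝒜 ℓ V x / (#V * (#V - 1).choose ℓ) := by
  have hsub : ∀ S ∈ 𝒜, S ⊆ V := fun S hS ↦ (mem_powersetCard.1 (h𝒜 hS)).1
  have hnot : (#{S ∈ 𝒜 | x ∉ S} : ℝ) = #𝒜 - #{S ∈ 𝒜 | x ∈ S} := by
    rw [eq_sub_iff_add_eq, add_comm]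
    exact_mod_cast card_filter_add_card_filter_not _
  have hid := Nat.cast_choose_pred_mul ℓ (by omega) hℓ.le
  have hN : (0 : ℝ) < (#V).choose ℓ := by exact_mod_cast Nat.choose_pos hℓ.le
  have hN₁ : (0 : ℝ) < (#V - 1).choose ℓ := by exact_mod_cast Nat.choose_pos (by omega)
  have hV : (0 : ℝ) < #V := by exact_mod_cast (by omega : 0 < #V)
  rw [densityIn_erase_of_forall_subset hsub hx, densityIn_of_forall_subset hsub, centeredDegree,
    hnot]
  field_simp
  linear_combination (-(#𝒜 : ℝ)) * hid

theorem sum_densityIn_erase_sub (h𝒜 : 𝒜 ⊆ powersetCard ℓ V) (hℓ : ℓ < #V) :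
    ∑ x ∈ V, (densityIn 𝒜 ℓ (V.erase x) - densityIn 𝒜 ℓ V) = 0 := by
  rw [sum_congr rfl fun x hx ↦ densityIn_erase_sub h𝒜 hℓ hx, ← sum_div, sum_neg_distrib,
    sum_centeredDegree h𝒜, neg_zero, zero_div]

theorem abs_densityIn_erase_sub_le (h𝒜 : 𝒜 ⊆ powersetCard ℓ V) (hℓ : ℓ < #V) {x : α}
    (hx : x ∈ V) :
    |densityIn 𝒜 ℓ (V.erase x) - densityIn 𝒜 ℓ V| ≤ ℓ / (#V - ℓ) := by
  have hid := Nat.cast_choose_pred_mul ℓ (by omega) hℓ.le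
  have hN₁ : (0 : ℝ) < (#V - 1).choose ℓ := by exact_mod_cast Nat.choose_pos (by omega)
  have hV : (0 : ℝ) < #V := by exact_mod_cast (by omega : 0 < #V)
  have hVℓ : (0 : ℝ) < #V - ℓ := by rw [sub_pos]; exact_mod_cast hℓ
  rw [densityIn_erase_sub h𝒜 hℓ hx, abs_div, abs_neg, abs_of_pos (mul_pos hV hN₁),
    div_le_div_iff₀ (mul_pos hV hN₁) hVℓ]
  calc |centeredDegree 𝒜 ℓ V x| * (#V - ℓ)
      ≤ #V * ((#V).choose ℓ - (#V - 1).choose ℓ) * (#V - ℓ) := by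
        gcongr
        exact abs_centeredDegree_le h𝒜 hℓ.le hx
    _ = ℓ * (#V * (#V - 1).choose ℓ) := by linear_combination (-(#V : ℝ)) * hid

theorem sum_sq_densityIn_erase_sub_le (h𝒜 : 𝒜 ⊆ powersetCard ℓ V) (hℓ : ℓ < #V)
    (hV : 2 ≤ #V) :
    ∑ x ∈ V, (densityIn 𝒜 ℓ (V.erase x) - densityIn 𝒜 ℓ V) ^ 2
      ≤ ℓ * #V / ((#V - 1) * (#V - ℓ)) := by
  have hid₁ := Nat.cast_choose_pred_mul ℓ (by omega) hℓ.le
  have hid₂ := Nat.cast_choose_pred_mul ℓ (n := #V - 1) (by omega) (by omega)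
  rw [Nat.sub_sub, Nat.cast_sub (by omega), Nat.cast_one] at hid₂
  have hN₁ : (0 : ℝ) < (#V - 1).choose ℓ := by exact_mod_cast Nat.choose_pos (by omega)
  have hN₂ : ((#V - 2).choose ℓ : ℝ) ≤ (#V - 1).choose ℓ := by
    exact_mod_cast Nat.choose_le_choose ℓ (by omega)
  have h𝒜N : (#𝒜 : ℝ) ≤ (#V).choose ℓ := by
    exact_mod_cast (card_le_card h𝒜).trans (card_powersetCard ℓ V).le
  set N : ℝ := ↑((#V).choose ℓ)
  set N₁ : ℝ := ↑((#V - 1).choose ℓ)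
  set N₂ : ℝ := ↑((#V - 2).choose ℓ)
  have hV₀ : (0 : ℝ) < #V := by exact_mod_cast (by omega : 0 < #V)
  have hV₁ : (0 : ℝ) < #V - 1 := by rw [sub_pos]; exact_mod_cast hV
  have hVℓ : (0 : ℝ) < #V - ℓ := by rw [sub_pos]; exact_mod_cast hℓ
  have hsum : ∑ x ∈ V, (densityIn 𝒜 ℓ (V.erase x) - densityIn 𝒜 ℓ V) ^ 2
      = (∑ x ∈ V, centeredDegree 𝒜 ℓ V x ^ 2) / (#V * N₁) ^ 2 := by
    rw [sum_div]
    exact sum_congr rfl fun x hx ↦ by rw [densityIn_erase_sub h𝒜 hℓ hx, div_pow, neg_sq]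
  rw [hsum, div_le_div_iff₀ (by positivity) (by positivity)]
  calc (∑ x ∈ V, centeredDegree 𝒜 ℓ V x ^ 2) * ((#V - 1) * (#V - ℓ))
      ≤ #V ^ 2 * #𝒜 * (N₁ - N₂) * ((#V - 1) * (#V - ℓ)) := by
        gcongr
        exact sum_centeredDegree_sq_le h𝒜
    _ ≤ #V ^ 2 * N * (N₁ - N₂) * ((#V - 1) * (#V - ℓ)) := by gcongr
    _ = ℓ * #V * (#V * N₁) ^ 2 := by
        linear_combination (-(#V : ℝ) ^ 2 * (#V - 1) * (N₁ - N₂)) * hid₁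
          - (#V : ℝ) ^ 3 * N₁ * hid₂

theorem sum_exp_densityIn_sub_densityIn_erase_le {𝒜 : Finset (Finset α)} {ℓ : ℕ}
    {V : Finset α} (h𝒜 : (𝒜 : Set (Finset α)).Sized ℓ) (hV : ℓ + 2 ≤ #V) {θ : ℝ}
    (hθ : |θ| * ℓ ≤ #V - ℓ) :
    ∑ x ∈ V, Real.exp (θ * (densityIn 𝒜 ℓ V - densityIn 𝒜 ℓ (V.erase x)))
      ≤ #V * Real.exp (θ ^ 2 * ℓ * (1 / (#V - 1 - ℓ) - 1 / (#V - ℓ))) := by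
  set ℬ := {S ∈ 𝒜 | S ⊆ V}
  have hℬ : ℬ ⊆ powersetCard ℓ V := fun S hS ↦ by
    rw [mem_filter] at hS
    exact mem_powersetCard.2 ⟨hS.2, h𝒜 hS.1⟩
  have hℓ : ℓ < #V := by omega
  have hV₀ : (0 : ℝ) < #V := by exact_mod_cast (by omega : 0 < #V)
  have hV₁ : (0 : ℝ) < #V - 1 - ℓ := by
    have : (ℓ : ℝ) + 2 ≤ #V := by exact_mod_cast hV
    linarith
  have hVℓ : (0 : ℝ) < #V - ℓ := by linarith
  set δ : α → ℝ := fun x ↦ densityIn ℬ ℓ (V.erase x) - densityIn ℬ ℓ V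
  have hy : ∀ x ∈ V, θ * (densityIn 𝒜 ℓ V - densityIn 𝒜 ℓ (V.erase x)) = -(θ * δ x) :=
    fun x _ ↦ by
      rw [← densityIn_filter_subset subset_rfl, ← densityIn_filter_subset (erase_subset x V)]
      ring
  rw [sum_congr rfl fun x hx ↦ by rw [hy x hx]]
  have hsum : ∑ x ∈ V, -(θ * δ x) = 0 := by
    rw [sum_neg_distrib, ← mul_sum, sum_densityIn_erase_sub hℬ hℓ, mul_zero, neg_zero]
  have habs : ∀ x ∈ V, |-(θ * δ x)| ≤ 1 := fun x hx ↦ by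
    rw [abs_neg, abs_mul]
    calc |θ| * |δ x| ≤ |θ| * (ℓ / (#V - ℓ)) := by
          gcongr
          exact abs_densityIn_erase_sub_le hℬ hℓ hx
      _ ≤ 1 := by
        rw [← mul_div_assoc, div_le_one (by linarith)]
        exact hθ
  refine (Real.sum_exp_le_card_mul_exp_sum_sq hsum habs).trans ?_
  gcongr
  calc (∑ x ∈ V, (-(θ * δ x)) ^ 2) / #V = θ ^ 2 * (∑ x ∈ V, δ x ^ 2) / #V := by
        simp_rw [neg_sq, mul_pow, ← mul_sum]
    _ ≤ θ ^ 2 * (ℓ * #V / ((#V - 1) * (#V - ℓ))) / #V := by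
        gcongr
        exact sum_sq_densityIn_erase_sub_le hℬ hℓ (by omega)
    _ = θ ^ 2 * ℓ / ((#V - 1) * (#V - ℓ)) := by field_simp
    _ ≤ θ ^ 2 * ℓ / ((#V - 1 - ℓ) * (#V - ℓ)) := by
        refine div_le_div_of_nonneg_left (by positivity) (by positivity) ?_
        exact mul_le_mul_of_nonneg_right (by linarith [(Nat.cast_nonneg ℓ : (0 : ℝ) ≤ ℓ)])
          hVℓ.le
    _ = θ ^ 2 * ℓ * (1 / (#V - 1 - ℓ) - 1 / (#V - ℓ)) := by
        field_simp
        ring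

theorem card_filter_densityIn_lt_le (h𝒜 : (𝒜 : Set (Finset α)).Sized ℓ) {n : ℕ} (hn : ℓ < n)
    (hnV : n ≤ #V) {θ : ℝ} (hθ : 0 ≤ θ) (hθn : θ * ℓ ≤ n + 1 - ℓ) (ε : ℝ) :
    (#{K ∈ powersetCard n V | densityIn 𝒜 ℓ K < densityIn 𝒜 ℓ V - ε} : ℝ)
      ≤ (#V).choose n * Real.exp (θ ^ 2 * ℓ / (n - ℓ) - θ * ε) := by
  set g : ℕ → ℝ := fun k ↦ θ ^ 2 * ℓ / (k - ℓ)
  have hstep : ∀ W : Finset α, n < #W →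
      ∑ x ∈ W, Real.exp (θ * densityIn 𝒜 ℓ W - θ * densityIn 𝒜 ℓ (W.erase x))
        ≤ #W * Real.exp (g (#W - 1) - g #W) := fun W hW ↦ by
    have hWn : (n : ℝ) + 1 ≤ #W := by exact_mod_cast hW
    have hexp : g (#W - 1) - g #W = θ ^ 2 * ℓ * (1 / (#W - 1 - ℓ) - 1 / (#W - ℓ)) := by
      simp only [g, Nat.cast_sub (by omega : 1 ≤ #W), Nat.cast_one]
      ring
    simp_rw [← mul_sub, hexp]
    exact sum_exp_densityIn_sub_densityIn_erase_le h𝒜 (by omega)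
      (by rw [abs_of_nonneg hθ]; linarith)
  have hchain := sum_powersetCard_exp_sub_le _ g hstep hnV
  have hgV : 0 ≤ g #V := by
    have : (n : ℝ) ≤ #V := by exact_mod_cast hnV
    have : (ℓ : ℝ) < n := by exact_mod_cast hn
    exact div_nonneg (by positivity) (by linarith)
  have hmarkov : (#{K ∈ powersetCard n V | densityIn 𝒜 ℓ K < densityIn 𝒜 ℓ V - ε} : ℝ)
        * Real.exp (θ * ε)
      ≤ ∑ K ∈ powersetCard n V, Real.exp (θ * densityIn 𝒜 ℓ V - θ * densityIn 𝒜 ℓ K) := by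
    rw [← nsmul_eq_mul]
    refine (card_nsmul_le_sum _ _ _ fun K hK ↦ ?_).trans
      (sum_le_sum_of_subset_of_nonneg (filter_subset _ _) fun _ _ _ ↦ (Real.exp_pos _).le)
    rw [mem_filter] at hK
    rw [Real.exp_le_exp, ← mul_sub]
    exact mul_le_mul_of_nonneg_left (by linarith [hK.2]) hθ
  rw [Real.exp_sub, ← mul_div_assoc, le_div_iff₀ (Real.exp_pos _)]
  refine hmarkov.trans (hchain.trans ?_)
  gcongr
  linarith

theorem card_filter_densityIn_lt_le_exp (h𝒜 : (𝒜 : Set (Finset α)).Sized ℓ) (hℓ : 0 < ℓ)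
    {t n : ℕ} (ht : 2 ≤ t) (htn : t * ℓ ≤ n) (hnV : n ≤ #V) {ε : ℝ} (hε : 0 ≤ ε) (hε₂ : ε ≤ 2) :
    (#{K ∈ powersetCard n V | densityIn 𝒜 ℓ K < densityIn 𝒜 ℓ V - ε} : ℝ)
      ≤ (#V).choose n * Real.exp (-(ε ^ 2 * (t - 1) / 4)) := by
  have hn : ℓ < n := by nlinarith
  have hnℓ : (0 : ℝ) < n - ℓ := by rw [sub_pos]; exact_mod_cast hn
  have ht₁ : (1 : ℝ) ≤ t := by exact_mod_cast (by omega : 1 ≤ t)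
  have htℓ : ((t : ℝ) - 1) * ℓ ≤ n - ℓ := by
    have : ((t * ℓ : ℕ) : ℝ) ≤ n := by exact_mod_cast htn
    push_cast at this
    linarith
  have hsℓ : 0 ≤ ((t : ℝ) - 1) * ℓ := by nlinarith [(Nat.cast_nonneg ℓ : (0 : ℝ) ≤ ℓ)]
  refine (card_filter_densityIn_lt_le h𝒜 hn hnV (θ := ε * (t - 1) / 2)
    (by nlinarith) (by nlinarith) ε).trans ?_
  gcongr
  have : (ε * (t - 1) / 2) ^ 2 * ℓ / (n - ℓ) ≤ ε ^ 2 * (t - 1) / 4 := by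
    rw [div_le_iff₀ hnℓ]
    nlinarith [mul_le_mul_of_nonneg_left htℓ (by nlinarith : 0 ≤ ε ^ 2 * (t - 1))]
  linarith

end

theorem Real.four_mul_sq_add_one_lt {a t : ℝ} (ha : 0 ≤ a) (ht : 0 < t) :
    4 * a ^ 2 + 1 < ((2 * a + √(8 * Real.log 2)) / √t) ^ 2 * t := by
  have hr := Real.sq_sqrt (by positivity : (0 : ℝ) ≤ 8 * Real.log 2)
  rw [div_pow, Real.sq_sqrt ht.le, div_mul_cancel₀ _ ht.ne']
  nlinarith [Real.sqrt_nonneg (8 * Real.log 2), Real.log_two_gt_d9]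

theorem stmt17 (m ℓ ℓ' t : ℕ) (ht : 1 ≤ t) (hm : t * ℓ + ℓ' ≤ m)
    (a : ℝ) (ha : 0 < a)
    (G : Finset (Finset ℕ)) (hG : G ⊆ (Finset.Icc 1 m).powersetCard ℓ) :
    let ε : ℝ := (2 * a + Real.sqrt (8 * Real.log 2)) / Real.sqrt t
    let α : ℝ := (G.card : ℝ) / (m.choose ℓ : ℝ)
    ((((Finset.Icc 1 m).powersetCard ℓ').filter fun H =>
        ((G.filter fun S => Disjoint S H).card : ℝ) <
          (α - ε) * ((m - ℓ').choose ℓ : ℝ)).card : ℝ) / ((m.choose ℓ' : ℕ) : ℝ) <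
      2 * Real.exp (-a ^ 2 / 2) := by
  intro ε α
  set V := Icc 1 m
  have hV : #V = m := by simp [V]
  have hsub : ∀ S ∈ G, S ⊆ V := fun S hS ↦ (mem_powersetCard.1 (hG hS)).1
  have hα : densityIn G ℓ V = α := by rw [densityIn_of_forall_subset hsub, hV]
  have hℓm : ℓ + ℓ' ≤ m := by nlinarith
  have hC : (0 : ℝ) < m.choose ℓ' := by exact_mod_cast Nat.choose_pos (by omega)
  rw [← hV, card_filter_card_filter_disjoint_lt hsub (by omega), ← hα, hV, div_lt_iff₀ hC]
  have hε₀ : 0 < ε := by positivity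
  by_cases htriv : ℓ = 0 ∨ 1 ≤ ε
  · rw [filter_densityIn_lt_eq_empty hG hε₀.le htriv, card_empty, Nat.cast_zero]
    positivity
  push Not at htriv
  have hεt : 4 * a ^ 2 + 1 < ε ^ 2 * t := Real.four_mul_sq_add_one_lt ha.le (by positivity)
  have ht₂ : 2 ≤ t := by
    by_contra h
    obtain rfl : t = 1 := by omega
    rw [Nat.cast_one, mul_one] at hεt
    nlinarith [htriv.2]
  have hsized : (G : Set (Finset ℕ)).Sized ℓ := fun S hS ↦ (mem_powersetCard.1 (hG hS)).2
  refine (card_filter_densityIn_lt_le_exp hsized (Nat.pos_of_ne_zero htriv.1) ht₂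
    (by omega) (by omega) hε₀.le (by linarith)).trans_lt ?_
  rw [hV, Nat.choose_symm (by omega)]
  have hexp : Real.exp (-(ε ^ 2 * ((t : ℝ) - 1) / 4)) ≤ Real.exp (-a ^ 2 / 2) :=
    Real.exp_le_exp.2 (by nlinarith)
  nlinarith [Real.exp_pos (-a ^ 2 / 2)]
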